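/- The fiber product ring K[x,y] ×_{K[x]} K[t], where K[x,y] → K[x] is the quotient by (y) and K[t] → K[x] sends t to x², is isomorphic as a K-algebra to K[u,v,w]/(u² − v²w), via u ↦ (xy, 0), v ↦ (y, 0), w ↦ (x², t). -/

import Mathlib

/-!
Modulo `u² - v²w` every polynomial in `u, v, w` is `p(w,v) + u q(w,v)`, and the first component
of its image is `p(x², y) + xy q(x², y)`; comparing the parts of even and odd degree in `x` shows
that this vanishes only for `p = q = 0`, which gives the kernel. For the image, `f(x,0) = g(x²)`
means `f = g(x²) + y h`, so `(f, g) = phi3 (g(w)) + (y h, 0)`, and writing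
`h = p(x², y) + x q(x², y)` gives `(y h, 0) = phi3 (v p(w,v) + u q(w,v))`.
-/

/-- The `K`-algebra map `K[u,v,w] → K[x,y] × K[t]` with
`u ↦ (xy, 0)`, `v ↦ (y, 0)`, `w ↦ (x², t)`. -/
noncomputable def phi3 (K : Type*) [Field K] :
    MvPolynomial (Fin 3) K →ₐ[K] MvPolynomial (Fin 2) K × Polynomial K :=
  MvPolynomial.aeval
    ![(MvPolynomial.X 0 * MvPolynomial.X 1, 0),
      (MvPolynomial.X 1, 0),
      (MvPolynomial.X 0 ^ 2, Polynomial.X)]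

namespace Polynomial

theorem eq_zero_of_expand_two_add_X_mul_C_mul_expand_two_eq_zero {R : Type*} [CommRing R]
    [NoZeroDivisors R] {r : R} (hr : r ≠ 0) {P Q : R[X]}
    (h : expand R 2 P + X * C r * expand R 2 Q = 0) : P = 0 ∧ Q = 0 := by
  have heven (k : ℕ) : P.coeff k = 0 := by
    have := congrArg (coeff · (2 * k)) h
    rcases k with _ | k
    · simpa [coeff_expand] using this
    · rw [show 2 * (k + 1) = 2 * k + 1 + 1 by omega] at this
      simpa [mul_assoc, coeff_expand, Nat.dvd_add_right, show (2 * k + 1 + 1) / 2 = k + 1 by omega]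
        using this
  have hodd (k : ℕ) : Q.coeff k = 0 := by
    have := congrArg (coeff · (2 * k + 1)) h
    simpa [mul_assoc, coeff_expand, hr] using this
  exact ⟨ext heven, ext hodd⟩

end Polynomial

namespace MvPolynomial

theorem X_dvd_sub_aeval_update_X_zero {R σ : Type*} [CommRing R] [DecidableEq σ]
    (i : σ) (f : MvPolynomial σ R) : X i ∣ f - aeval (Function.update X i 0) f := by
  induction f using MvPolynomial.induction_on with
  | C a => simp
  | add p q hp hq => simpa [add_sub_add_comm] using dvd_add hp hq
  | mul_X p j hp =>
    by_cases hj : j = i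
    · subst hj
      simp
    · simpa [hj, sub_mul] using dvd_mul_of_dvd_left hp (X j)

end MvPolynomial

open MvPolynomial

namespace WhitneyUmbrella

variable {R : Type*} [CommRing R]

variable (R) in
noncomputable def ofWV : MvPolynomial (Fin 2) R →ₐ[R] MvPolynomial (Fin 3) R :=
  aeval ![X 2, X 1]

variable (R) in
noncomputable def ofX2Y : MvPolynomial (Fin 2) R →ₐ[R] MvPolynomial (Fin 2) R :=
  aeval ![X 0 ^ 2, X 1]

@[simp] theorem ofWV_X_zero : ofWV R (X 0) = X 2 := by simp [ofWV]

@[simp] theorem ofWV_X_one : ofWV R (X 1) = X 1 := by simp [ofWV]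

@[simp] theorem ofX2Y_X_zero : ofX2Y R (X 0) = X 0 ^ 2 := by simp [ofX2Y]

@[simp] theorem ofX2Y_X_one : ofX2Y R (X 1) = X 1 := by simp [ofX2Y]

theorem exists_sub_ofWV_add_X_zero_mul_ofWV_mem (P : MvPolynomial (Fin 3) R) :
    ∃ p q, P - (ofWV R p + X 0 * ofWV R q) ∈
      Ideal.span {(X 0 ^ 2 - X 1 ^ 2 * X 2 : MvPolynomial (Fin 3) R)} := by
  set I := Ideal.span {(X 0 ^ 2 - X 1 ^ 2 * X 2 : MvPolynomial (Fin 3) R)}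
  have hrel : X 0 ^ 2 - X 1 ^ 2 * X 2 ∈ I := Ideal.subset_span rfl
  induction P using MvPolynomial.induction_on with
  | C a => exact ⟨C a, 0, by simp [ofWV]⟩
  | add P Q hP hQ =>
    obtain ⟨p, q, hpq⟩ := hP
    obtain ⟨p', q', hpq'⟩ := hQ
    refine ⟨p + p', q + q', ?_⟩
    convert I.add_mem hpq hpq' using 1
    simp only [map_add]
    ring
  | mul_X P i hP =>
    obtain ⟨p, q, hpq⟩ := hP
    match i with
    | 0 =>
      refine ⟨X 1 ^ 2 * X 0 * q, p, ?_⟩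
      convert I.add_mem (I.mul_mem_right (X 0) hpq) (I.mul_mem_right (ofWV R q) hrel) using 1
      simp only [map_mul, map_pow, ofWV_X_zero, ofWV_X_one]
      ring
    | 1 =>
      refine ⟨X 1 * p, X 1 * q, ?_⟩
      convert I.mul_mem_right (X 1) hpq using 1
      simp only [map_mul, ofWV_X_one]
      ring
    | 2 =>
      refine ⟨X 0 * p, X 0 * q, ?_⟩
      convert I.mul_mem_right (X 2) hpq using 1
      simp only [map_mul, ofWV_X_zero]
      ring

theorem exists_eq_ofX2Y_add_X_zero_mul_ofX2Y (f : MvPolynomial (Fin 2) R) :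
    ∃ p q, f = ofX2Y R p + X 0 * ofX2Y R q := by
  induction f using MvPolynomial.induction_on with
  | C a => exact ⟨C a, 0, by simp [ofX2Y]⟩
  | add f g hf hg =>
    obtain ⟨p, q, rfl⟩ := hf
    obtain ⟨p', q', rfl⟩ := hg
    exact ⟨p + p', q + q', by simp only [map_add]; ring⟩
  | mul_X f i hf =>
    obtain ⟨p, q, rfl⟩ := hf
    match i with
    | 0 => exact ⟨X 0 * q, p, by simp only [map_mul, ofX2Y_X_zero]; ring⟩
    | 1 => exact ⟨X 1 * p, X 1 * q, by simp only [map_mul, ofX2Y_X_one]; ring⟩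

theorem finSuccEquiv_X_one : finSuccEquiv R 1 (X 1) = Polynomial.C (X 0) := by
  rw [show (1 : Fin 2) = Fin.succ 0 from rfl, finSuccEquiv_X_succ]

theorem finSuccEquiv_ofX2Y (p : MvPolynomial (Fin 2) R) :
    finSuccEquiv R 1 (ofX2Y R p) = Polynomial.expand _ 2 (finSuccEquiv R 1 p) := by
  suffices (finSuccEquiv R 1).toAlgHom.comp (ofX2Y R) =
      ((Polynomial.expand _ 2).restrictScalars R).comp (finSuccEquiv R 1).toAlgHom from
    AlgHom.congr_fun this p
  ext i
  fin_cases i <;> simp [finSuccEquiv_X_zero, finSuccEquiv_X_one]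

theorem eq_zero_of_ofX2Y_add_X_zero_mul_X_one_mul_ofX2Y_eq_zero [IsDomain R]
    {p q : MvPolynomial (Fin 2) R} (h : ofX2Y R p + X 0 * X 1 * ofX2Y R q = 0) :
    p = 0 ∧ q = 0 := by
  have h' := congrArg (finSuccEquiv R 1) h
  simp only [map_add, map_mul, map_zero, finSuccEquiv_ofX2Y, finSuccEquiv_X_zero,
    finSuccEquiv_X_one] at h'
  simpa using Polynomial.eq_zero_of_expand_two_add_X_mul_C_mul_expand_two_eq_zero (X_ne_zero 0) h'

section phi3

variable {K : Type*} [Field K]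

@[simp] theorem phi3_X_zero : phi3 K (X 0) = (X 0 * X 1, 0) := by simp [phi3]

@[simp] theorem phi3_X_one : phi3 K (X 1) = (X 1, 0) := by simp [phi3]

@[simp] theorem phi3_X_two : phi3 K (X 2) = (X 0 ^ 2, Polynomial.X) := by simp [phi3]

theorem phi3_ofWV (p : MvPolynomial (Fin 2) K) :
    phi3 K (ofWV K p) = (ofX2Y K p, aeval ![Polynomial.X, 0] p) := by
  suffices (phi3 K).comp (ofWV K) = (ofX2Y K).prod (aeval ![Polynomial.X, 0]) from
    AlgHom.congr_fun this p
  refine MvPolynomial.algHom_ext fun i ↦ ?_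
  fin_cases i <;> simp

theorem phi3_aeval_X_two (g : Polynomial K) :
    phi3 K (Polynomial.aeval (X 2) g) = (Polynomial.aeval (X 0 ^ 2) g, g) := by
  rw [← Polynomial.aeval_algHom_apply, phi3_X_two, Polynomial.aeval_prod_apply,
    Polynomial.aeval_X_left_apply]

theorem ker_phi3 :
    RingHom.ker (phi3 K) = Ideal.span {X 0 ^ 2 - X 1 ^ 2 * X 2} := by
  have hle : Ideal.span {X 0 ^ 2 - X 1 ^ 2 * X 2} ≤ RingHom.ker (phi3 K) := by
    rw [Ideal.span_le, Set.singleton_subset_iff, SetLike.mem_coe, RingHom.mem_ker]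
    simp [mul_pow, mul_comm]
  refine le_antisymm (fun P hP ↦ ?_) hle
  obtain ⟨p, q, hPpq⟩ := exists_sub_ofWV_add_X_zero_mul_ofWV_mem P
  have hpq : phi3 K (ofWV K p + X 0 * ofWV K q) = 0 := by
    have := RingHom.mem_ker.mp (hle hPpq)
    rwa [map_sub, RingHom.mem_ker.mp hP, zero_sub, neg_eq_zero] at this
  obtain ⟨rfl, rfl⟩ : p = 0 ∧ q = 0 := by
    refine eq_zero_of_ofX2Y_add_X_zero_mul_X_one_mul_ofX2Y_eq_zero ?_
    simpa [phi3_ofWV] using congrArg Prod.fst hpq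
  simpa using hPpq

theorem aeval_fst_phi3_eq_aeval_snd_phi3 (P : MvPolynomial (Fin 3) K) :
    aeval ![Polynomial.X, (0 : Polynomial K)] (phi3 K P).1 =
      Polynomial.aeval (Polynomial.X ^ 2) (phi3 K P).2 := by
  suffices (aeval ![Polynomial.X, (0 : Polynomial K)]).comp ((AlgHom.fst K _ _).comp (phi3 K)) =
      (Polynomial.aeval (Polynomial.X ^ 2)).comp ((AlgHom.snd K _ _).comp (phi3 K)) from
    AlgHom.congr_fun this P
  refine MvPolynomial.algHom_ext fun i ↦ ?_
  fin_cases i <;> simp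

theorem mk_X_one_mul_zero_mem_range_phi3 (h : MvPolynomial (Fin 2) K) :
    ((X 1 * h, 0) : MvPolynomial (Fin 2) K × Polynomial K) ∈ Set.range (phi3 K) := by
  obtain ⟨p, q, rfl⟩ := exists_eq_ofX2Y_add_X_zero_mul_ofX2Y h
  refine ⟨X 1 * ofWV K p + X 0 * ofWV K q, ?_⟩
  simp [phi3_ofWV, mul_add, mul_left_comm, mul_assoc]

theorem range_phi3 :
    Set.range (phi3 K) =
      {fg : MvPolynomial (Fin 2) K × Polynomial K |
        aeval ![Polynomial.X, (0 : Polynomial K)] fg.1 =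
          Polynomial.aeval (Polynomial.X ^ 2 : Polynomial K) fg.2} := by
  refine (Set.range_subset_iff.mpr aeval_fst_phi3_eq_aeval_snd_phi3).antisymm ?_
  rintro ⟨f, g⟩ (hfg : aeval ![Polynomial.X, 0] f = Polynomial.aeval (Polynomial.X ^ 2) g)
  have hf0 : aeval (Function.update X 1 0) f =
      Polynomial.aeval (X 0 ^ 2 : MvPolynomial (Fin 2) K) g := by
    have hpt : (Function.update X 1 0 : Fin 2 → MvPolynomial (Fin 2) K) =
        fun i ↦ Polynomial.aeval (X 0) (![Polynomial.X, (0 : Polynomial K)] i) := by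
      funext i
      fin_cases i <;> simp
    rw [hpt, ← comp_aeval_apply, hfg, ← Polynomial.aeval_algHom_apply]
    simp
  obtain ⟨h, hh⟩ := X_dvd_sub_aeval_update_X_zero 1 f
  obtain ⟨P, hP⟩ := mk_X_one_mul_zero_mem_range_phi3 h
  refine ⟨Polynomial.aeval (X 2) g + P, ?_⟩
  rw [map_add, phi3_aeval_X_two, hP, ← hf0, ← hh, Prod.mk_add_mk, add_sub_cancel, add_zero]

end phi3

end WhitneyUmbrella

open WhitneyUmbrella in
theorem stmt_3 (K : Type*) [Field K] :
    RingHom.ker (phi3 K) =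
      Ideal.span {MvPolynomial.X 0 ^ 2 - MvPolynomial.X 1 ^ 2 * MvPolynomial.X 2} ∧
    Set.range (phi3 K) =
      {fg : MvPolynomial (Fin 2) K × Polynomial K |
        MvPolynomial.aeval ![Polynomial.X, (0 : Polynomial K)] fg.1 =
          Polynomial.aeval (Polynomial.X ^ 2 : Polynomial K) fg.2} :=
  ⟨ker_phi3, range_phi3⟩
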